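/- Define g(s) := Q(s) + s φ(s) − φ(s)²/Q(s) for s ∈ ℝ. Then g is differentiable with g′(s) = −(φ(s)/Q(s)²)·( s Q(s) − φ(s) )² for every s ∈ ℝ; consequently g is nonincreasing on ℝ, and g(s) → 0 as s → ∞. -/

import Mathlib

/-!
From `Q' = -φ` and `φ'(s) = -s φ(s)` one computes `g' = -(φ/Q²)(sQ - φ)² ≤ 0` directly.
For the limit, `g ≤ Q + sφ` is immediate, while the Mills-type bound `Q(s) ≥ sφ(s)/(s² + 1)`
gives `φ²/Q ≤ (s + 1/s) φ`, hence `g ≥ Q - φ` for `s ≥ 1`; both bounds tend to `0`.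
The Mills bound holds because `Q - sφ/(s² + 1)` has derivative `-2φ/(s² + 1)² ≤ 0`
and tends to `0`.
-/

/-- The standard Gaussian pdf. -/
noncomputable def gaussPdf (x : ℝ) : ℝ := (Real.sqrt (2 * Real.pi))⁻¹ * Real.exp (-x ^ 2 / 2)

/-- The standard Gaussian complementary cdf `Q(x) = ∫_x^∞ φ(t) dt`. -/
noncomputable def gaussQ (x : ℝ) : ℝ := ∫ t in Set.Ioi x, gaussPdf t

open MeasureTheory intervalIntegral Filter Set Topology

section TailIntegral

variable {E : Type*} [NormedAddCommGroup E] [NormedSpace ℝ E] {f : ℝ → E}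

theorem integral_Ioi_eq_sub_intervalIntegral (hf : Integrable f) (a x : ℝ) :
    ∫ t in Ioi x, f t = (∫ t in Ioi a, f t) - ∫ t in a..x, f t := by
  rw [← integral_Ioi_sub_Ioi' hf.integrableOn hf.integrableOn, sub_sub_cancel]

theorem hasDerivAt_integral_Ioi [CompleteSpace E] (hf : Integrable f) (hcont : Continuous f)
    (x : ℝ) :
    HasDerivAt (fun y => ∫ t in Ioi y, f t) (-f x) x := by
  rw [funext (integral_Ioi_eq_sub_intervalIntegral hf 0)]
  simpa using (integral_hasDerivAt_right (hcont.intervalIntegrable 0 x)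
    (hcont.stronglyMeasurableAtFilter _ _) hcont.continuousAt).const_sub (∫ t in Ioi 0, f t)

theorem tendsto_integral_Ioi_atTop [CompleteSpace E] (hf : Integrable f) :
    Tendsto (fun y => ∫ t in Ioi y, f t) atTop (𝓝 0) := by
  rw [funext (integral_Ioi_eq_sub_intervalIntegral hf 0)]
  simpa using (intervalIntegral_tendsto_integral_Ioi 0 hf.integrableOn tendsto_id).const_sub
    (∫ t in Ioi 0, f t)

end TailIntegral

theorem integral_Ioi_pos {f : ℝ → ℝ} (hf : Integrable f) (hpos : ∀ t, 0 < f t) (x : ℝ) :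
    0 < ∫ t in Ioi x, f t := by
  have hsupp : Function.support f = univ := by
    ext t
    simp [(hpos t).ne']
  rw [setIntegral_pos_iff_support_of_nonneg_ae (ae_of_all _ fun t => (hpos t).le) hf.integrableOn,
    hsupp, univ_inter]
  simp

theorem gaussPdf_eq_gaussianPDFReal : gaussPdf = ProbabilityTheory.gaussianPDFReal 0 1 := by
  ext x
  simp [gaussPdf, ProbabilityTheory.gaussianPDFReal]

theorem gaussPdf_pos (x : ℝ) : 0 < gaussPdf x := by
  unfold gaussPdf
  positivity

theorem integrable_gaussPdf : Integrable gaussPdf :=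
  gaussPdf_eq_gaussianPDFReal ▸ ProbabilityTheory.integrable_gaussianPDFReal 0 1

theorem continuous_gaussPdf : Continuous gaussPdf := by
  unfold gaussPdf
  fun_prop

theorem hasDerivAt_gaussPdf (x : ℝ) : HasDerivAt gaussPdf (-x * gaussPdf x) x := by
  have hexponent : HasDerivAt (fun t : ℝ => -t ^ 2 / 2) (-x) x :=
    ((hasDerivAt_pow 2 x).neg.div_const 2).congr_deriv (by ring)
  unfold gaussPdf
  exact (hexponent.exp.const_mul _).congr_deriv (by ring)

theorem tendsto_rpow_mul_gaussPdf_atTop (r : ℝ) :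
    Tendsto (fun x => x ^ r * gaussPdf x) atTop (𝓝 0) := by
  have h := ((tendsto_rpow_abs_mul_exp_neg_mul_sq_cocompact (a := 1 / 2) (by norm_num) r).mono_left
    atTop_le_cocompact).const_mul (Real.sqrt (2 * Real.pi))⁻¹
  rw [mul_zero] at h
  refine h.congr' ?_
  filter_upwards [eventually_ge_atTop 0] with x hx
  simp only [gaussPdf, abs_of_nonneg hx]
  ring_nf

theorem tendsto_gaussPdf_atTop : Tendsto gaussPdf atTop (𝓝 0) := by
  simpa using tendsto_rpow_mul_gaussPdf_atTop 0

theorem tendsto_mul_gaussPdf_atTop : Tendsto (fun x => x * gaussPdf x) atTop (𝓝 0) := by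
  simpa using tendsto_rpow_mul_gaussPdf_atTop 1

theorem gaussQ_pos (x : ℝ) : 0 < gaussQ x :=
  integral_Ioi_pos integrable_gaussPdf gaussPdf_pos x

theorem hasDerivAt_gaussQ (x : ℝ) : HasDerivAt gaussQ (-gaussPdf x) x :=
  hasDerivAt_integral_Ioi integrable_gaussPdf continuous_gaussPdf x

theorem tendsto_gaussQ_atTop : Tendsto gaussQ atTop (𝓝 0) :=
  tendsto_integral_Ioi_atTop integrable_gaussPdf

theorem mul_gaussPdf_div_le_gaussQ (s : ℝ) : s * gaussPdf s / (s ^ 2 + 1) ≤ gaussQ s := by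
  set bound : ℝ → ℝ := fun x => x * gaussPdf x / (x ^ 2 + 1)
  have hderiv (x : ℝ) :
      HasDerivAt (fun x => gaussQ x - bound x) (-(2 * gaussPdf x) / (x ^ 2 + 1) ^ 2) x := by
    have hnum := (hasDerivAt_id x).mul (hasDerivAt_gaussPdf x)
    have hden := (hasDerivAt_pow 2 x).add_const 1
    refine ((hasDerivAt_gaussQ x).sub (hnum.div hden (by positivity))).congr_deriv ?_
    simp only [id, Pi.mul_apply]
    field_simp
    ring
  have hanti : Antitone fun x => gaussQ x - bound x := by
    refine antitone_of_deriv_nonpos (fun x => (hderiv x).differentiableAt) fun x => ?_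
    rw [(hderiv x).deriv]
    have := gaussPdf_pos x
    exact div_nonpos_of_nonpos_of_nonneg (by linarith) (by positivity)
  have hbound : Tendsto bound atTop (𝓝 0) :=
    tendsto_mul_gaussPdf_atTop.div_atTop
      (tendsto_atTop_add_const_right _ 1 (tendsto_pow_atTop two_ne_zero))
  have := hanti.le_of_tendsto (by simpa using tendsto_gaussQ_atTop.sub hbound) s
  linarith

noncomputable def clippingLoss (s : ℝ) : ℝ :=
  gaussQ s + s * gaussPdf s - gaussPdf s ^ 2 / gaussQ s

theorem hasDerivAt_clippingLoss (s : ℝ) :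
    HasDerivAt clippingLoss
      (-(gaussPdf s / gaussQ s ^ 2) * (s * gaussQ s - gaussPdf s) ^ 2) s := by
  have hQ := hasDerivAt_gaussQ s
  have hpdf := hasDerivAt_gaussPdf s
  refine ((hQ.add ((hasDerivAt_id s).mul hpdf)).sub
    ((hpdf.pow 2).div hQ (gaussQ_pos s).ne')).congr_deriv ?_
  have := (gaussQ_pos s).ne'
  simp only [id, Pi.pow_apply]
  field_simp
  ring

theorem antitone_clippingLoss : Antitone clippingLoss := by
  refine antitone_of_deriv_nonpos (fun s => (hasDerivAt_clippingLoss s).differentiableAt)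
    fun s => ?_
  rw [(hasDerivAt_clippingLoss s).deriv, neg_mul]
  exact neg_nonpos.mpr (by have := gaussPdf_pos s; positivity)

theorem clippingLoss_le (s : ℝ) : clippingLoss s ≤ gaussQ s + s * gaussPdf s := by
  have := gaussPdf_pos s
  have := gaussQ_pos s
  have : 0 < gaussPdf s ^ 2 / gaussQ s := by positivity
  unfold clippingLoss
  linarith

theorem gaussQ_sub_gaussPdf_le_clippingLoss {s : ℝ} (hs : 1 ≤ s) :
    gaussQ s - gaussPdf s ≤ clippingLoss s := by
  have hQ := gaussQ_pos s
  have hpdf := gaussPdf_pos s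
  have hmills : s * gaussPdf s ≤ gaussQ s * (s ^ 2 + 1) :=
    (div_le_iff₀ (by positivity)).mp (mul_gaussPdf_div_le_gaussQ s)
  have : gaussPdf s ^ 2 / gaussQ s ≤ (s + 1) * gaussPdf s := by
    rw [div_le_iff₀ hQ]
    nlinarith [mul_pos hQ hpdf, mul_pos hpdf hpdf]
  unfold clippingLoss
  linarith

theorem tendsto_clippingLoss_atTop : Tendsto clippingLoss atTop (𝓝 0) := by
  refine tendsto_of_tendsto_of_tendsto_of_le_of_le'
    (by simpa using tendsto_gaussQ_atTop.sub tendsto_gaussPdf_atTop)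
    (by simpa using tendsto_gaussQ_atTop.add tendsto_mul_gaussPdf_atTop) ?_
    (Eventually.of_forall clippingLoss_le)
  filter_upwards [eventually_ge_atTop 1] with s hs
  exact gaussQ_sub_gaussPdf_le_clippingLoss hs

/-- The Fisher-information clipping-loss function `g(s) = Q(s) + s φ(s) - φ(s)²/Q(s)` has
derivative `-(φ(s)/Q(s)²) (s Q(s) - φ(s))²`, is nonincreasing, and tends to `0` at `+∞`. -/
theorem clipping_loss_deriv_antitone_tendsto :
    (∀ s : ℝ, HasDerivAt (fun t => gaussQ t + t * gaussPdf t - (gaussPdf t) ^ 2 / gaussQ t)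
      (-(gaussPdf s / (gaussQ s) ^ 2) * (s * gaussQ s - gaussPdf s) ^ 2) s) ∧
    Antitone (fun s => gaussQ s + s * gaussPdf s - (gaussPdf s) ^ 2 / gaussQ s) ∧
    Filter.Tendsto (fun s => gaussQ s + s * gaussPdf s - (gaussPdf s) ^ 2 / gaussQ s)
      Filter.atTop (nhds 0) :=
  ⟨hasDerivAt_clippingLoss, antitone_clippingLoss, tendsto_clippingLoss_atTop⟩
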